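/- arXiv:1911.00937 — 2 statements merged into one kernel-verified Lean document; each statement's English description precedes it below -/
import Mathlib

section
/- If r is a rank tuple for which there exist indices i, j with |r_i − r_j| ≥ 2, then there exists a rank tuple r' with Σ_i r'_i = Σ_i r_i, 𝒞(r) ⊆ 𝒞(r'), and Σ_i (r'_i)² < Σ_i (r_i)². -/
/-!
Write `A_j = H · [X^j] ∏ᵢ (Pᵢ + (1 - Pᵢ) X)`, the product taken in increasing order of `i`.
For two adjacent factors, `(P + (1 - P) X) (Q + (1 - Q) X)` depends only on `P + Q` and `P Q`.
If `rank Q < rank P`, then `range P ∩ ker Q ≠ 0`, and for the orthogonal projection `E` onto a line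
in it, `P - E` and `Q + E` are symmetric projectors with the same sum and the same products `P Q`,
`Q P`. So one unit of rank can move from `r p` to an adjacent `r q < r p` without leaving SOCK; this
changes `∑ r²` by `-2 (r p - r q - 1)`, a strict decrease if `r q + 2 ≤ r p` and a swap of the two
ranks if `r p = r q + 1`. Given `r j + 2 ≤ r i`, induct on `|i - j|` through the neighbour `k` of `j`
towards `i`: either `(i, k)` or `(k, j)` again has a gap `≥ 2`, or `r k = r j + 1` and swapping
`r k`, `r j` brings the pair closer.
-/

open Matrix

def IsSymProj (n : ℕ) (P : Matrix (Fin n) (Fin n) ℝ) : Prop :=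
  P * P = P ∧ Pᵀ = P

noncomputable def Aker (n K : ℕ) (P : Fin (K-1) → Matrix (Fin n) (Fin n) ℝ)
    (H : Matrix (Fin n) (Fin n) ℝ) : Fin K → Matrix (Fin n) (Fin n) ℝ :=
  fun j => ∑ δ ∈ Finset.univ.filter
      (fun δ : Fin (K-1) → Bool => (∑ i, (if δ i then 1 else 0)) = (j : ℕ)),
    H * ((List.finRange (K-1)).map
      (fun i => if δ i then (1 : Matrix (Fin n) (Fin n) ℝ) - P i else P i)).prod

def SOCK (n K : ℕ) (r : Fin (K-1) → ℕ) : Set (Fin K → Matrix (Fin n) (Fin n) ℝ) :=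
  {A | ∃ P H, (∀ i, IsSymProj n (P i) ∧ (P i).rank = r i) ∧
    Hᵀ * H = 1 ∧ H.det = 1 ∧ A = Aker n K P H}

open Polynomial

theorem Matrix.rank_eq_trace_of_mul_self {ι K : Type*} [Fintype ι] [DecidableEq ι] [Field K]
    {M : Matrix ι ι K} (h : M * M = M) : (M.rank : K) = M.trace := by
  have hM : IsIdempotentElem M.toLin' := by
    rw [IsIdempotentElem, Module.End.mul_eq_comp, ← Matrix.toLin'_mul, h]
  rw [← Matrix.trace_toLin'_eq, (LinearMap.IsIdempotentElem.isProj_range _ hM).trace, Matrix.rank,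
    Matrix.toLin'_apply']

theorem Matrix.exists_mulVec_eq_self_mulVec_eq_zero {ι K : Type*} [Fintype ι] [DecidableEq ι]
    [Field K] {P Q : Matrix ι ι K} (hP : P * P = P) (h : Q.rank < P.rank) :
    ∃ v, v ≠ 0 ∧ P *ᵥ v = v ∧ Q *ᵥ v = 0 := by
  have hdisj : ¬ Disjoint (LinearMap.range P.mulVecLin) (LinearMap.ker Q.mulVecLin) := by
    intro hd
    have hsum := Submodule.finrank_add_finrank_le_of_disjoint hd
    have hQ := LinearMap.finrank_range_add_finrank_ker Q.mulVecLin
    rw [Module.finrank_fintype_fun_eq_card] at hsum hQ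
    change Module.finrank K (LinearMap.range Q.mulVecLin)
      < Module.finrank K (LinearMap.range P.mulVecLin) at h
    omega
  rw [Submodule.disjoint_def] at hdisj
  push Not at hdisj
  obtain ⟨v, ⟨w, rfl⟩, hv, hv0⟩ := hdisj
  refine ⟨P *ᵥ w, hv0, ?_, hv⟩
  rw [Matrix.mulVec_mulVec, hP]

theorem IsSymProj.exists_trace_eq_one {n : ℕ} {P Q : Matrix (Fin n) (Fin n) ℝ}
    (hP : IsSymProj n P) (h : Q.rank < P.rank) :
    ∃ E, IsSymProj n E ∧ E.trace = 1 ∧ P * E = E ∧ Q * E = 0 := by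
  obtain ⟨v, hv0, hPv, hQv⟩ := exists_mulVec_eq_self_mulVec_eq_zero hP.1 h
  have hc : v ⬝ᵥ v ≠ 0 := fun h => hv0 (dotProduct_self_eq_zero.mp h)
  refine ⟨(v ⬝ᵥ v)⁻¹ • vecMulVec v v, ⟨?_, ?_⟩, ?_, ?_, ?_⟩
  · rw [smul_mul_smul_comm, vecMulVec_mul_vecMulVec, vecMulVec_smul, smul_smul,
      inv_mul_cancel_right₀ hc]
  · rw [transpose_smul, transpose_vecMulVec]
  · rw [trace_smul, trace_vecMulVec, smul_eq_mul, inv_mul_cancel₀ hc]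
  · rw [Matrix.mul_smul, mul_vecMulVec, hPv]
  · rw [Matrix.mul_smul, mul_vecMulVec, hQv, zero_vecMulVec, smul_zero]

theorem IsSymProj.exists_transfer {n : ℕ} {P Q : Matrix (Fin n) (Fin n) ℝ}
    (hP : IsSymProj n P) (hQ : IsSymProj n Q) (h : Q.rank < P.rank) :
    ∃ P' Q', IsSymProj n P' ∧ IsSymProj n Q' ∧ P'.rank + 1 = P.rank ∧ Q'.rank = Q.rank + 1 ∧
      P' + Q' = P + Q ∧ P' * Q' = P * Q ∧ Q' * P' = Q * P := by
  obtain ⟨E, ⟨hEE, hEt⟩, htr, hPE, hQE⟩ := hP.exists_trace_eq_one h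
  have hEP : E * P = E := by rw [← hEt, ← hP.2, ← transpose_mul, hPE]
  have hEQ : E * Q = 0 := by rw [← hEt, ← hQ.2, ← transpose_mul, hQE, transpose_zero]
  have hP' : IsSymProj n (P - E) := by
    refine ⟨?_, by rw [transpose_sub, hP.2, hEt]⟩
    rw [sub_mul, mul_sub, mul_sub, hP.1, hPE, hEP, hEE, sub_self, sub_zero]
  have hQ' : IsSymProj n (Q + E) := by
    refine ⟨?_, by rw [transpose_add, hQ.2, hEt]⟩
    rw [add_mul, mul_add, mul_add, hQ.1, hQE, hEQ, hEE, zero_add, add_zero]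
  have hrP : ((P - E).rank : ℝ) + 1 = P.rank := by
    rw [rank_eq_trace_of_mul_self hP'.1, rank_eq_trace_of_mul_self hP.1, trace_sub, htr,
      sub_add_cancel]
  have hrQ : ((Q + E).rank : ℝ) = Q.rank + 1 := by
    rw [rank_eq_trace_of_mul_self hQ'.1, rank_eq_trace_of_mul_self hQ.1, trace_add, htr]
  refine ⟨P - E, Q + E, hP', hQ', by exact_mod_cast hrP, by exact_mod_cast hrQ,
    sub_add_add_cancel P Q E, ?_, ?_⟩
  · rw [sub_mul, mul_add, mul_add, hPE, hEQ, hEE, zero_add, add_sub_cancel_right]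
  · rw [add_mul, mul_sub, mul_sub, hQE, hEP, hEE, sub_self, add_zero, sub_zero]

theorem Polynomial.prod_ofFn_C_add_C_mul_X {R : Type*} [Semiring R] {m : ℕ} (F G : Fin m → R) :
    (List.ofFn fun i => C (F i) + C (G i) * X).prod
      = ∑ δ : Fin m → Bool, C (List.ofFn fun i => if δ i then G i else F i).prod
          * X ^ (∑ i, if δ i then 1 else 0) := by
  induction m with
  | zero => simp
  | succ m ih =>
    rw [List.ofFn_succ, List.prod_cons, ih, add_mul, Finset.mul_sum, Finset.mul_sum,
      ← (Fin.consEquiv fun _ => Bool).sum_comp, Fintype.sum_prod_type, Fintype.sum_bool, add_comm]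
    congr 1 <;> refine Finset.sum_congr rfl fun δ _ => ?_
    · simp only [Fin.consEquiv, Equiv.coe_fn_mk, List.ofFn_succ, Fin.cons_zero, Fin.cons_succ,
        if_true, List.prod_cons, map_mul, Fin.sum_univ_succ]
      rw [mul_assoc, ← mul_assoc X, X_mul_C, add_comm 1, pow_succ']
      simp only [mul_assoc]
    · simp only [Fin.consEquiv, Equiv.coe_fn_mk, List.ofFn_succ, Fin.cons_zero, Fin.cons_succ,
        Bool.false_eq_true, if_false, List.prod_cons, map_mul, Fin.sum_univ_succ, zero_add, mul_assoc]

theorem Polynomial.coeff_prod_ofFn_C_add_C_mul_X {R : Type*} [Semiring R] {m : ℕ}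
    (F G : Fin m → R) (j : ℕ) :
    (List.ofFn fun i => C (F i) + C (G i) * X).prod.coeff j
      = ∑ δ ∈ Finset.univ.filter (fun δ : Fin m → Bool => (∑ i, if δ i then 1 else 0) = j),
          (List.ofFn fun i => if δ i then G i else F i).prod := by
  simp only [prod_ofFn_C_add_C_mul_X, finsetSum_coeff, coeff_C_mul_X_pow, Finset.sum_filter,
    eq_comm]

theorem List.prod_ofFn_eq_of_adjacent {M : Type*} [Monoid M] {m : ℕ} {f g : Fin m → M}
    {p q : Fin m} (hpq : (p : ℕ) + 1 = q) (hfg : ∀ a, a ≠ p → a ≠ q → f a = g a)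
    (hmul : f p * f q = g p * g q) : (List.ofFn f).prod = (List.ofFn g).prod := by
  obtain ⟨q, hq⟩ := q
  subst hpq
  have split : ∀ h : Fin m → M, (List.ofFn h).prod
      = ((List.ofFn h).take p).prod * (h p * h ⟨p + 1, hq⟩) * ((List.ofFn h).drop (p + 2)).prod := by
    intro h
    rw [← List.prod_take_mul_prod_drop _ (p + 2), List.prod_take_succ _ _ (by simpa),
      List.prod_take_succ _ _ (by simp), List.getElem_ofFn, List.getElem_ofFn]
    simp only [mul_assoc]
  have hne : ∀ a : Fin m, (a : ℕ) < p ∨ (p : ℕ) + 2 ≤ a → f a = g a := fun a ha =>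
    hfg a (by rintro rfl; omega) (by rintro rfl; simp at ha)
  have htake : (List.ofFn f).take p = (List.ofFn g).take p :=
    List.ext_getElem (by simp) fun k hk _ => by
      simpa only [List.getElem_take, List.getElem_ofFn] using hne _ (Or.inl (by simpa using hk))
  have hdrop : (List.ofFn f).drop (p + 2) = (List.ofFn g).drop (p + 2) :=
    List.ext_getElem (by simp) fun k hk _ => by
      simpa only [List.getElem_drop, List.getElem_ofFn] using hne _ (Or.inr (by simp))
  rw [split f, split g, hmul, htake, hdrop]

theorem mul_eq_of_add_eq_of_mul_eq {S : Type*} [Ring S] {x a b a' b' : S}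
    (hb : Commute x b) (hb' : Commute x b')
    (hsum : a' + b' = a + b) (hprod : a' * b' = a * b) :
    (a' + (1 - a') * x) * (b' + (1 - b') * x) = (a + (1 - a) * x) * (b + (1 - b) * x) := by
  have expand : ∀ c d : S, Commute x d → (c + (1 - c) * x) * (d + (1 - d) * x)
      = c * d + ((c + d) - (c * d + c * d)) * x + (1 - (c + d) + c * d) * x ^ 2 := by
    intro c d hd
    calc _ = c * d + c * (1 - d) * x + (1 - c) * (x * d) + (1 - c) * (x * (1 - d)) * x := by
          noncomm_ring
      _ = _ := by rw [hd.eq, ((Commute.one_right x).sub_right hd).eq]; noncomm_ring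
  rw [expand a' b' hb', expand a b hb, hsum, hprod]

theorem Aker_eq_mul_coeff (n K : ℕ) (P : Fin (K-1) → Matrix (Fin n) (Fin n) ℝ)
    (H : Matrix (Fin n) (Fin n) ℝ) (j : Fin K) :
    Aker n K P H j = H * (List.ofFn fun i => C (P i) + (1 - C (P i)) * X).prod.coeff j := by
  have hfactor : (fun i => C (P i) + (1 - C (P i)) * X) = fun i => C (P i) + C (1 - P i) * X := by
    simp only [map_sub, map_one]
  rw [hfactor, coeff_prod_ofFn_C_add_C_mul_X, Finset.mul_sum, Aker]
  simp only [List.ofFn_eq_map]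

theorem Aker_eq_of_adjacent {n K : ℕ} {P P' : Fin (K-1) → Matrix (Fin n) (Fin n) ℝ}
    {p q : Fin (K-1)} (hadj : (SimpleGraph.pathGraph (K-1)).Adj p q)
    (hoff : ∀ x, x ≠ p → x ≠ q → P' x = P x) (hsum : P' p + P' q = P p + P q)
    (hpq : P' p * P' q = P p * P q) (hqp : P' q * P' p = P q * P p)
    (H : Matrix (Fin n) (Fin n) ℝ) : Aker n K P' H = Aker n K P H := by
  funext j
  rw [Aker_eq_mul_coeff, Aker_eq_mul_coeff]
  congr 2
  have factor_mul : ∀ {a b a' b' : Matrix (Fin n) (Fin n) ℝ}, a' + b' = a + b → a' * b' = a * b →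
      (C a' + (1 - C a') * X) * (C b' + (1 - C b') * X)
        = (C a + (1 - C a) * X) * (C b + (1 - C b) * X) := fun hs hm =>
    mul_eq_of_add_eq_of_mul_eq (commute_X _) (commute_X _)
      (by rw [← C_add, ← C_add, hs]) (by rw [← C_mul, ← C_mul, hm])
  rcases SimpleGraph.pathGraph_adj.mp hadj with h | h
  · exact List.prod_ofFn_eq_of_adjacent h (fun x hp hq => by rw [hoff x hp hq])
      (factor_mul hsum hpq)
  · exact List.prod_ofFn_eq_of_adjacent h (fun x hq hp => by rw [hoff x hp hq])
      (factor_mul (by rw [add_comm, hsum, add_comm]) hqp)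

theorem SOCK_subset_of_transfer {n K : ℕ} {r r' : Fin (K-1) → ℕ} {p q : Fin (K-1)}
    (hadj : (SimpleGraph.pathGraph (K-1)).Adj p q) (hlt : r q < r p)
    (hp : r' p + 1 = r p) (hq : r' q = r q + 1) (hoff : ∀ x, x ≠ p → x ≠ q → r' x = r x) :
    SOCK n K r ⊆ SOCK n K r' := by
  rintro _ ⟨P, H, hP, hH, hdet, rfl⟩
  obtain ⟨P', Q', hP', hQ', hrP', hrQ', hsum, hpq, hqp⟩ :=
    (hP p).1.exists_transfer (hP q).1 (by rw [(hP p).2, (hP q).2]; exact hlt)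
  set P'' := Function.update (Function.update P p P') q Q'
  have hp'' : P'' p = P' := by simp [P'', hadj.ne]
  have hq'' : P'' q = Q' := by simp [P'']
  have hoff'' : ∀ x, x ≠ p → x ≠ q → P'' x = P x := fun x hxp hxq => by simp [P'', hxp, hxq]
  refine ⟨P'', H, fun x => ?_, hH, hdet, (Aker_eq_of_adjacent hadj hoff''
    (by rw [hp'', hq'', hsum]) (by rw [hp'', hq'', hpq]) (by rw [hp'', hq'', hqp]) H).symm⟩
  by_cases hxq : x = q
  · subst hxq
    rw [hq'', hq, hrQ', (hP x).2]
    exact ⟨hQ', rfl⟩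
  by_cases hxp : x = p
  · subst hxp
    refine hp'' ▸ ⟨hP', ?_⟩
    have := (hP x).2
    omega
  · rw [hoff'' x hxp hxq, hoff x hxp hxq]
    exact hP x

theorem Fintype.sum_add_add_eq_of_eq_off_pair {ι M : Type*} [Fintype ι] [DecidableEq ι]
    [AddCommMonoid M] {f g : ι → M} {p q : ι} (hpq : p ≠ q)
    (h : ∀ x, x ≠ p → x ≠ q → f x = g x) : ∑ x, f x + (g p + g q) = ∑ x, g x + (f p + f q) := by
  have split : ∀ φ : ι → M, ∑ x, φ x = φ p + (φ q + ∑ x ∈ (Finset.univ.erase p).erase q, φ x) :=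
    fun φ => by
      rw [← Finset.add_sum_erase _ φ (Finset.mem_univ p),
        ← Finset.add_sum_erase _ φ (Finset.mem_erase.mpr ⟨hpq.symm, Finset.mem_univ q⟩)]
  rw [split f, split g, Finset.sum_congr rfl fun x hx =>
    h x (Finset.ne_of_mem_erase (Finset.mem_of_mem_erase hx)) (Finset.ne_of_mem_erase hx)]
  abel

theorem exists_SOCK_subset_transfer {n K : ℕ} {r : Fin (K-1) → ℕ} (hr : ∀ x, r x ≤ n)
    {p q : Fin (K-1)} (hadj : (SimpleGraph.pathGraph (K-1)).Adj p q) (hlt : r q < r p) :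
    ∃ r' : Fin (K-1) → ℕ, (∀ x, r' x ≤ n) ∧ ∑ x, r' x = ∑ x, r x ∧ SOCK n K r ⊆ SOCK n K r' ∧
      r' p + 1 = r p ∧ (∀ x, x ≠ p → x ≠ q → r' x = r x) ∧
      ∑ x, r' x ^ 2 + 2 * r p = ∑ x, r x ^ 2 + 2 * r q + 2 := by
  set r' := Function.update (Function.update r p (r p - 1)) q (r q + 1)
  have hp : r' p + 1 = r p := by simp [r', hadj.ne]; omega
  have hq : r' q = r q + 1 := by simp [r']
  have hoff : ∀ x, x ≠ p → x ≠ q → r' x = r x := fun x hxp hxq => by simp [r', hxp, hxq]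
  have hsum := Fintype.sum_add_add_eq_of_eq_off_pair hadj.ne hoff
  have hsq := Fintype.sum_add_add_eq_of_eq_off_pair (f := fun x => r' x ^ 2) (g := fun x => r x ^ 2)
    hadj.ne fun x hxp hxq => by rw [hoff x hxp hxq]
  refine ⟨r', fun x => ?_, by omega, SOCK_subset_of_transfer hadj hlt hp hq hoff, hp, hoff, ?_⟩
  · by_cases hxq : x = q
    · have := hr p; rw [hxq]; omega
    by_cases hxp : x = p
    · have := hr p; rw [hxp]; omega
    · rw [hoff x hxp hxq]; exact hr x
  · rw [hq, ← hp] at hsq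
    nlinarith

theorem exists_SOCK_subset_sum_sq_lt_of_adjacent {n K : ℕ} {r : Fin (K-1) → ℕ}
    (hr : ∀ x, r x ≤ n) {i j : Fin (K-1)} (hadj : (SimpleGraph.pathGraph (K-1)).Adj i j)
    (hij : r j + 2 ≤ r i) :
    ∃ r' : Fin (K-1) → ℕ, (∀ x, r' x ≤ n) ∧ ∑ x, r' x = ∑ x, r x ∧
      SOCK n K r ⊆ SOCK n K r' ∧ ∑ x, r' x ^ 2 < ∑ x, r x ^ 2 := by
  obtain ⟨r', hbound, hsum, hsub, -, -, hsq⟩ := exists_SOCK_subset_transfer hr hadj (by omega)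
  exact ⟨r', hbound, hsum, hsub, by omega⟩

theorem Fin.exists_pathGraph_adj_dist_eq {m d : ℕ} {i j : Fin m} (h : Nat.dist i j = d + 2) :
    ∃ k, (SimpleGraph.pathGraph m).Adj k j ∧ Nat.dist i k = d + 1 := by
  unfold Nat.dist at *
  simp only [SimpleGraph.pathGraph_adj]
  rcases lt_or_gt_of_ne (show (i : ℕ) ≠ j by omega) with hij | hij
  · exact ⟨⟨j - 1, by omega⟩, by dsimp only; omega⟩
  · exact ⟨⟨j + 1, by omega⟩, by dsimp only; omega⟩

theorem exists_SOCK_subset_sum_sq_lt_of_dist_eq {n K : ℕ} (d : ℕ) {r : Fin (K-1) → ℕ}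
    (hr : ∀ x, r x ≤ n) {i j : Fin (K-1)} (hd : Nat.dist i j = d + 1) (hij : r j + 2 ≤ r i) :
    ∃ r' : Fin (K-1) → ℕ, (∀ x, r' x ≤ n) ∧ ∑ x, r' x = ∑ x, r x ∧
      SOCK n K r ⊆ SOCK n K r' ∧ ∑ x, r' x ^ 2 < ∑ x, r x ^ 2 := by
  induction d generalizing r i j with
  | zero =>
    refine exists_SOCK_subset_sum_sq_lt_of_adjacent hr ?_ hij
    unfold Nat.dist at hd
    rw [SimpleGraph.pathGraph_adj]
    omega
  | succ d ih =>
    obtain ⟨k, hkj, hik⟩ := Fin.exists_pathGraph_adj_dist_eq hd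
    by_cases hik_gap : r k + 2 ≤ r i
    · exact ih hr hik hik_gap
    by_cases hkj_gap : r j + 2 ≤ r k
    · exact exists_SOCK_subset_sum_sq_lt_of_adjacent hr hkj hkj_gap
    -- here `r k = r j + 1`, so the transfer from `k` to `j` swaps their ranks
    obtain ⟨r₁, hbound₁, hsum₁, hsub₁, hk₁, hoff₁, hsq₁⟩ :=
      exists_SOCK_subset_transfer hr hkj (by omega)
    have hi₁ : r₁ i = r i := hoff₁ i (by rintro rfl; unfold Nat.dist at hik; omega)
      (by rintro rfl; unfold Nat.dist at hd; omega)
    obtain ⟨r', hbound, hsum, hsub, hsq⟩ := ih hbound₁ hik (by omega)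
    exact ⟨r', hbound, hsum.trans hsum₁, hsub₁.trans hsub, by omega⟩

theorem exists_SOCK_subset_sum_sq_lt {n K : ℕ} {r : Fin (K-1) → ℕ} (hr : ∀ x, r x ≤ n)
    {i j : Fin (K-1)} (hij : r j + 2 ≤ r i) :
    ∃ r' : Fin (K-1) → ℕ, (∀ x, r' x ≤ n) ∧ ∑ x, r' x = ∑ x, r x ∧
      SOCK n K r ⊆ SOCK n K r' ∧ ∑ x, r' x ^ 2 < ∑ x, r x ^ 2 := by
  have hne : (i : ℕ) ≠ j := fun h => by rw [Fin.ext h] at hij; omega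
  exact exists_SOCK_subset_sum_sq_lt_of_dist_eq (Nat.dist i j - 1) hr
    (by unfold Nat.dist; omega) hij

theorem stmt6_general (n K : ℕ)
    (r : Fin (K-1) → ℕ) (hr : ∀ i, r i ≤ n)
    (i j : Fin (K-1)) (hij : 2 ≤ |(r i : ℤ) - (r j : ℤ)|) :
    ∃ r' : Fin (K-1) → ℕ, (∀ p, r' p ≤ n) ∧ (∑ p, r' p = ∑ p, r p) ∧
      SOCK n K r ⊆ SOCK n K r' ∧ ∑ p, (r' p) ^ 2 < ∑ p, (r p) ^ 2 := by
  rcases le_abs'.mp hij with h | h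
  · exact exists_SOCK_subset_sum_sq_lt hr (i := j) (j := i) (by omega)
  · exact exists_SOCK_subset_sum_sq_lt hr (i := i) (j := j) (by omega)

theorem stmt6 (n K : ℕ) (hn : 1 ≤ n) (hK : 2 ≤ K)
    (r : Fin (K-1) → ℕ) (hr : ∀ i, r i ≤ n)
    (i j : Fin (K-1)) (hij : 2 ≤ |(r i : ℤ) - (r j : ℤ)|) :
    ∃ r' : Fin (K-1) → ℕ, (∀ p, r' p ≤ n) ∧ (∑ p, r' p = ∑ p, r p) ∧
      SOCK n K r ⊆ SOCK n K r' ∧ ∑ p, (r' p) ^ 2 < ∑ p, (r p) ^ 2 :=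
  stmt6_general n K r hr i j hij
end

section
/- Let 1 ≤ i ≤ K−2, let P_1,…,P_{K−1} and P'_1,…,P'_{K−1} be symmetric projectors with P'_p = P_p for every p ∉ {i, i+1}, and let H, H' be special orthogonal matrices (HᵀH = I, det H = 1). Then 𝒜(P_1,…,P_{K−1},H) = 𝒜(P'_1,…,P'_{K−1},H') if and only if P_i + P_{i+1} = P'_i + P'_{i+1}, P_i·P_{i+1} = P'_i·P'_{i+1}, and H = H'. -/
open Matrix

/-!
The kernel is the coefficient list of the matrix polynomial `H * ∏ₚ (Pₚ + X (1 - Pₚ))`, and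
evaluating it at `X = 1` shows that its coefficients sum to `H`. For an idempotent `P`,
`(P + X (1 - P)) * ((1 - P) + X P) = X = ((1 - P) + X P) * (P + X (1 - P))`, so every factor
is a non-zero-divisor, and `Hᵀ H = 1` makes `H` cancellable. Hence two kernels with the same `H`
agree exactly when the products of the two differing adjacent factors agree, and the coefficients of
`(A + X (1 - A)) * (B + X (1 - B))` are `A B`, `A + B - 2 A B` and `1 - (A + B) + A B`.
-/

open Polynomial

theorem List.prod_map_finRange_add {R : Type*} [Semiring R] :
    ∀ {m : ℕ} (a b : Fin m → R), ((List.finRange m).map fun p => a p + b p).prod =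
      ∑ δ : Fin m → Bool, ((List.finRange m).map fun p => if δ p then b p else a p).prod
  | 0, _, _ => by simp
  | m + 1, a, b => by
    rw [← (Fin.consEquiv fun _ => Bool).sum_comp, Fintype.sum_prod_type, Fintype.sum_bool]
    simp only [← List.ofFn_eq_map, List.ofFn_succ, List.prod_cons]
    simp [Fin.consEquiv, List.ofFn_eq_map, List.prod_map_finRange_add (fun p => a p.succ),
      add_mul, Finset.mul_sum, Finset.sum_add_distrib, add_comm]

theorem List.isRegular_prod {M : Type*} [Monoid M] {l : List M} (hl : ∀ x ∈ l, IsRegular x) :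
    IsRegular l.prod :=
  List.prod_induction _ (fun _ _ => IsRegular.mul) isRegular_one hl

theorem List.prod_map_finRange_eq_iff_of_isRegular {M : Type*} [Monoid M] {m : ℕ}
    {f g : Fin m → M} (i : Fin m) (hi : (i : ℕ) + 1 < m) (hf : ∀ p, IsRegular (f p))
    (hfg : ∀ p, p ≠ i → p ≠ ⟨i + 1, hi⟩ → g p = f p) :
    ((List.finRange m).map f).prod = ((List.finRange m).map g).prod ↔
      f i * f ⟨i + 1, hi⟩ = g i * g ⟨i + 1, hi⟩ := by
  have hsplit : ∀ h : Fin m → M, ((List.finRange m).map h).prod =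
      (((List.finRange m).map h).take i).prod * (h i * h ⟨i + 1, hi⟩) *
        (((List.finRange m).map h).drop (i + 2)).prod := by
    intro h
    rw [← List.prod_take_mul_prod_drop _ i, List.drop_eq_getElem_cons (by simp),
      List.drop_eq_getElem_cons (by simp; omega)]
    simp [mul_assoc]
  have hne : ∀ k (hk : k < m), k ≠ i → k ≠ i + 1 → g ⟨k, hk⟩ = f ⟨k, hk⟩ := fun k hk h₁ h₂ =>
    hfg _ (fun h => h₁ (congrArg Fin.val h)) (fun h => h₂ (congrArg Fin.val h))
  have htake : ((List.finRange m).map g).take i = ((List.finRange m).map f).take i :=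
    List.ext_getElem (by simp) fun k hk _ => by
      simp only [List.length_take, List.length_map, List.length_finRange] at hk
      simpa using hne k (by omega) (by omega) (by omega)
  have hdrop : ((List.finRange m).map g).drop (i + 2) = ((List.finRange m).map f).drop (i + 2) :=
    List.ext_getElem (by simp) fun k hk _ => by
      simp only [List.length_drop, List.length_map, List.length_finRange] at hk
      simpa using hne (i + 2 + k) (by omega) (by omega) (by omega)
  have hreg : ∀ x ∈ (List.finRange m).map f, IsRegular x := by simpa using hf
  have htake_reg : IsRegular (((List.finRange m).map f).take i).prod :=
    List.isRegular_prod fun x hx => hreg x (List.mem_of_mem_take hx)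
  have hdrop_reg : IsRegular (((List.finRange m).map f).drop (i + 2)).prod :=
    List.isRegular_prod fun x hx => hreg x (List.mem_of_mem_drop hx)
  rw [hsplit f, hsplit g, htake, hdrop]
  exact ⟨fun h => htake_reg.left (hdrop_reg.right h), fun h => by rw [h]⟩

namespace Polynomial

theorem list_prod_map_X_pow_mul_C {R ι : Type*} [Semiring R] (l : List ι) (w : ι → ℕ)
    (c : ι → R) :
    (l.map fun p => X ^ w p * C (c p)).prod = X ^ (l.map w).sum * C (l.map c).prod := by
  induction l with
  | nil => simp
  | cons p l ih =>
    rw [List.map_cons, List.prod_cons, ih, mul_assoc, (commute_X_pow (C (c p)) _).symm.left_comm,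
      ← mul_assoc, ← pow_add, ← C_mul, List.map_cons, List.sum_cons, List.map_cons,
      List.prod_cons]

theorem coeff_sum_fin_X_pow_mul_C {R : Type*} [Semiring R] {K : ℕ} (A : Fin K → R) (j : Fin K) :
    (∑ k : Fin K, X ^ (k : ℕ) * C (A k)).coeff j = A j := by
  simp [Fin.val_inj]

end Polynomial

section AkerFactor

variable {R : Type*} [Ring R]

noncomputable def akerFactor (P : R) : R[X] := C P + X * C (1 - P)

theorem akerFactor_mul_akerFactor (A B : R) :
    akerFactor A * akerFactor B =
      C (A * B) + X * C (A + B - 2 * (A * B)) + X ^ 2 * C (1 - (A + B) + A * B) := by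
  have hX : ∀ (r : R) (q : R[X]), C r * (X * q) = X * (C r * q) := fun r q =>
    (commute_X (C r)).symm.left_comm q
  rw [← show A * (1 - B) + (1 - A) * B = A + B - 2 * (A * B) by noncomm_ring,
    ← show (1 - A) * (1 - B) = 1 - (A + B) + A * B by noncomm_ring]
  simp only [akerFactor, add_mul, mul_add, mul_assoc, hX, ← C_mul, C_add, sq]
  abel

theorem akerFactor_mul_akerFactor_eq_iff {A B A' B' : R} :
    akerFactor A * akerFactor B = akerFactor A' * akerFactor B' ↔
      A + B = A' + B' ∧ A * B = A' * B' := by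
  simp only [akerFactor_mul_akerFactor]
  constructor
  · intro h
    have h0 : A * B = A' * B' := by simpa using congrArg (coeff · 0) h
    have h2 := congrArg (coeff · 2) h
    simp only [coeff_add, coeff_C, coeff_X_mul, coeff_X_pow_mul', h0] at h2
    exact ⟨by simpa using h2, h0⟩
  · rintro ⟨hs, ht⟩
    rw [hs, ht]

theorem akerFactor_mul_akerFactor_one_sub {P : R} (hP : IsIdempotentElem P) :
    akerFactor P * akerFactor (1 - P) = X := by
  simp [akerFactor_mul_akerFactor, hP.mul_one_sub_self]

theorem isRegular_akerFactor {P : R} (hP : IsIdempotentElem P) : IsRegular (akerFactor P) := by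
  have h₁ := akerFactor_mul_akerFactor_one_sub hP
  have h₂ := akerFactor_mul_akerFactor_one_sub hP.one_sub
  rw [sub_sub_cancel] at h₂
  exact ⟨IsLeftRegular.of_mul (h₂ ▸ isRegular_X.left),
    IsRightRegular.of_mul (h₁ ▸ isRegular_X.right)⟩

end AkerFactor

noncomputable def akerPoly {n m : ℕ} (P : Fin m → Matrix (Fin n) (Fin n) ℝ)
    (H : Matrix (Fin n) (Fin n) ℝ) : (Matrix (Fin n) (Fin n) ℝ)[X] :=
  C H * ((List.finRange m).map fun p => akerFactor (P p)).prod

theorem akerPoly_eq_sum {n K : ℕ} (hK : 0 < K) (P : Fin (K - 1) → Matrix (Fin n) (Fin n) ℝ)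
    (H : Matrix (Fin n) (Fin n) ℝ) :
    akerPoly P H = ∑ j : Fin K, X ^ (j : ℕ) * C (Aker n K P H j) := by
  set wt : (Fin (K - 1) → Bool) → ℕ := fun δ => ∑ p, if δ p then 1 else 0
  set A : (Fin (K - 1) → Bool) → Matrix (Fin n) (Fin n) ℝ :=
    fun δ => ((List.finRange (K - 1)).map fun p => if δ p then 1 - P p else P p).prod
  have hterm : ∀ δ, ((List.finRange (K - 1)).map
      fun p => if δ p then X * C (1 - P p) else C (P p)).prod = X ^ wt δ * C (A δ) := by
    intro δ
    simp only [wt, A]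
    rw [Fin.sum_univ_def, ← list_prod_map_X_pow_mul_C]
    congr 1
    exact List.map_congr_left fun p _ => by cases δ p <;> simp
  have hwt : ∀ δ, wt δ < K := fun δ =>
    (Finset.sum_le_card_nsmul _ _ 1 fun p _ => by split <;> simp).trans_lt (by simp; omega)
  simp only [akerPoly, akerFactor]
  rw [List.prod_map_finRange_add (fun p => C (P p)), Finset.mul_sum,
    ← Finset.sum_fiberwise_of_maps_to (g := fun δ => (⟨wt δ, hwt δ⟩ : Fin K))
      (t := Finset.univ) (fun _ _ => Finset.mem_univ _)]
  refine Finset.sum_congr rfl fun j _ => ?_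
  simp only [Aker, map_sum, Finset.mul_sum, Fin.ext_iff]
  refine Finset.sum_congr rfl fun δ hδ => ?_
  rw [hterm, ← (Finset.mem_filter.1 hδ).2, ← mul_assoc, ← (commute_X_pow _ _).eq, mul_assoc,
    ← C_mul]

theorem Aker_eq_iff_akerPoly_eq {n K : ℕ} (hK : 0 < K)
    {P P' : Fin (K - 1) → Matrix (Fin n) (Fin n) ℝ} {H H' : Matrix (Fin n) (Fin n) ℝ} :
    Aker n K P H = Aker n K P' H' ↔ akerPoly P H = akerPoly P' H' := by
  rw [akerPoly_eq_sum hK, akerPoly_eq_sum hK]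
  refine ⟨fun h => h ▸ rfl, fun h => funext fun j => ?_⟩
  simpa only [coeff_sum_fin_X_pow_mul_C] using congrArg (coeff · j) h

theorem sum_Aker {n K : ℕ} (hK : 0 < K) (P : Fin (K - 1) → Matrix (Fin n) (Fin n) ℝ)
    (H : Matrix (Fin n) (Fin n) ℝ) : ∑ j, Aker n K P H j = H := by
  have := congrArg (eval₂RingHom' (RingHom.id _) 1 fun a => Commute.one_right a)
    (akerPoly_eq_sum hK P H)
  rw [akerPoly, map_mul, map_list_prod, List.map_map] at this
  simpa [akerFactor, Function.comp_def] using this.symm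

theorem stmt9_general (n K : ℕ)
    (i : Fin (K-1)) (hi : (i : ℕ) + 1 < K - 1)
    (P P' : Fin (K-1) → Matrix (Fin n) (Fin n) ℝ)
    (hP : ∀ p, IsSymProj n (P p))
    (hPeq : ∀ p, p ≠ i → p ≠ (⟨(i : ℕ) + 1, hi⟩ : Fin (K-1)) → P' p = P p)
    (H H' : Matrix (Fin n) (Fin n) ℝ)
    (hH : Hᵀ * H = 1) :
    Aker n K P H = Aker n K P' H' ↔
      (P i + P ⟨(i : ℕ) + 1, hi⟩ = P' i + P' ⟨(i : ℕ) + 1, hi⟩ ∧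
       P i * P ⟨(i : ℕ) + 1, hi⟩ = P' i * P' ⟨(i : ℕ) + 1, hi⟩ ∧ H = H') := by
  have hK : 0 < K := by omega
  have hCH : IsLeftRegular (C H) :=
    isLeftRegular_of_mul_eq_one (b := C Hᵀ) (by rw [← C_mul, hH, C_1])
  have hpoly : akerPoly P H = akerPoly P' H ↔ P i + P ⟨i + 1, hi⟩ = P' i + P' ⟨i + 1, hi⟩ ∧
      P i * P ⟨i + 1, hi⟩ = P' i * P' ⟨i + 1, hi⟩ := by
    rw [akerPoly, akerPoly, hCH.eq_iff, List.prod_map_finRange_eq_iff_of_isRegular i hi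
      (fun p => isRegular_akerFactor (hP p).1) (fun p h₁ h₂ => by rw [hPeq p h₁ h₂]),
      akerFactor_mul_akerFactor_eq_iff]
  constructor
  · intro h
    obtain rfl : H = H' := by rw [← sum_Aker hK P H, h, sum_Aker hK]
    obtain ⟨hs, ht⟩ := hpoly.1 ((Aker_eq_iff_akerPoly_eq hK).1 h)
    exact ⟨hs, ht, rfl⟩
  · rintro ⟨hs, ht, rfl⟩
    exact (Aker_eq_iff_akerPoly_eq hK).2 (hpoly.2 ⟨hs, ht⟩)

theorem stmt9 (n K : ℕ) (hn : 1 ≤ n) (hK : 3 ≤ K)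
    (i : Fin (K-1)) (hi : (i : ℕ) + 1 < K - 1)
    (P P' : Fin (K-1) → Matrix (Fin n) (Fin n) ℝ)
    (hP : ∀ p, IsSymProj n (P p)) (hP' : ∀ p, IsSymProj n (P' p))
    (hPeq : ∀ p, p ≠ i → p ≠ (⟨(i : ℕ) + 1, hi⟩ : Fin (K-1)) → P' p = P p)
    (H H' : Matrix (Fin n) (Fin n) ℝ)
    (hH : Hᵀ * H = 1) (hHdet : H.det = 1)
    (hH' : H'ᵀ * H' = 1) (hH'det : H'.det = 1) :
    Aker n K P H = Aker n K P' H' ↔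
      (P i + P ⟨(i : ℕ) + 1, hi⟩ = P' i + P' ⟨(i : ℕ) + 1, hi⟩ ∧
       P i * P ⟨(i : ℕ) + 1, hi⟩ = P' i * P' ⟨(i : ℕ) + 1, hi⟩ ∧ H = H') :=
  stmt9_general n K i hi P P' hP hPeq H H' hH
end
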